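/- arXiv:2305.05655 — 5 statements merged into one kernel-verified Lean document; each statement's English description precedes it below -/
import Mathlib

section
/- If a category C has all small products, then its free coproduct completion ΣC has all small products, given by the distributive law ∏_{i∈I} ∑_{j∈J_i} c_{i,j} ≅ ∑_{j̄ ∈ ∏_{i∈I} J_i} ∏_{i∈I} c_{i, j̄(i)}. -/
/-!
A morphism from `∑ₖ xₖ` to `∑_{j̄} ∏ᵢ c i (j̄ i)` picks for each `k` a tuple `j̄ₖ` and a map
`xₖ ⟶ ∏ᵢ c i (j̄ₖ i)`, i.e. for each `i` an index `j̄ₖ i` and a map `xₖ ⟶ c i (j̄ₖ i)`: exactly a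
family of morphisms `∑ₖ xₖ ⟶ ∑_{j ∈ Jᵢ} c i j`. So products in `ΣC` are computed by choosing
summands independently and taking products in `C`.
-/

open CategoryTheory Limits Opposite

universe v u

/-- The free product completion of a category. -/
structure FreeProd (C : Type u) [Category.{v} C] where
  ι : Type v
  obj : ι → C

instance FreeProd.category (C : Type u) [Category.{v} C] : Category.{v} (FreeProd C) where
  Hom X Y := Σ f : Y.ι → X.ι, ∀ j, X.obj (f j) ⟶ Y.obj j
  id X := ⟨fun i => i, fun _ => 𝟙 _⟩
  comp {X Y Z} F G := ⟨fun k => F.1 (G.1 k), fun k => F.2 (G.1 k) ≫ G.2 k⟩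
  id_comp F := by obtain ⟨f, g⟩ := F; dsimp; congr 1 <;> simp
  comp_id F := by obtain ⟨f, g⟩ := F; dsimp; congr 1 <;> simp
  assoc F G H := by dsimp; congr 1 <;> simp

/-- The free coproduct completion of a category. -/
structure FreeCoprod (C : Type u) [Category.{v} C] where
  ι : Type v
  obj : ι → C

instance FreeCoprod.category (C : Type u) [Category.{v} C] : Category.{v} (FreeCoprod C) where
  Hom X Y := Σ f : X.ι → Y.ι, ∀ i, X.obj i ⟶ Y.obj (f i)
  id X := ⟨fun i => i, fun _ => 𝟙 _⟩
  comp {X Y Z} F G := ⟨fun i => G.1 (F.1 i), fun i => F.2 i ≫ G.2 (F.1 i)⟩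
  id_comp F := by obtain ⟨f, g⟩ := F; dsimp; congr 1 <;> simp
  comp_id F := by obtain ⟨f, g⟩ := F; dsimp; congr 1 <;> simp
  assoc F G H := by dsimp; congr 1 <;> simp

namespace FreeCoprod

variable {C : Type u} [Category.{v} C]

noncomputable abbrev distribFan [HasProducts.{v} C] {I : Type v} (J : I → Type v)
    (c : ∀ i, J i → C) : Fan fun i => (⟨J i, c i⟩ : FreeCoprod C) :=
  Fan.mk ⟨∀ i, J i, fun jbar => ∏ᶜ fun i => c i (jbar i)⟩
    fun i => ⟨fun jbar => jbar i, fun jbar => Pi.π (fun i' => c i' (jbar i')) i⟩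

noncomputable def isLimitDistribFan [HasProducts.{v} C] {I : Type v} (J : I → Type v)
    (c : ∀ i, J i → C) : IsLimit (distribFan J c) :=
  Fan.IsLimit.mk _ (fun s => ⟨fun k i => (s.proj i).1 k, fun k => Pi.lift fun i => (s.proj i).2 k⟩)
    (fun s i => Sigma.ext rfl (heq_of_eq (funext fun _ => Pi.lift_π _ _)))
    (by
      rintro s ⟨f, g⟩ hm
      -- `hm` determines the index map `f`; once it is substituted, the components `g` can be
      -- compared without transport along `eqToHom`.
      obtain rfl : f = fun k i => (s.proj i).1 k :=
        funext₂ fun k i => congrFun (congrArg Sigma.fst (hm i)) k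
      have hg : ∀ k i, g k ≫ Pi.π _ i = (s.proj i).2 k := fun k i =>
        congrFun (eq_of_heq (Sigma.ext_iff.mp (hm i)).2) k
      refine Sigma.ext rfl (heq_of_eq (funext fun k => Pi.hom_ext _ _ fun i => ?_))
      simpa using hg k i)

theorem hasProducts [HasProducts.{v} C] : HasProducts.{v} (FreeCoprod C) :=
  hasProducts_of_limit_fans (fun X => distribFan (fun i => (X i).ι) fun i => (X i).obj)
    fun X => isLimitDistribFan (fun i => (X i).ι) fun i => (X i).obj

end FreeCoprod

/-- if `C` has all small products, then `ΣC` has all small products, given by the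
distributive law `∏_{i∈I} ∑_{j∈J_i} c_{i,j} ≅ ∑_{j̄∈∏_i J_i} ∏_i c_{i,j̄(i)}`: the formal sum
`∑_{j̄∈∏_i J_i} ∏_i c_{i,j̄(i)}`, equipped with the evident projections, is a categorical
product of the family `(∑_{j∈J_i} c_{i,j})_{i∈I}` in `ΣC`. -/
theorem freeCoprod_hasProducts_distributive (C : Type u) [Category.{v} C]
    [HasProducts.{v} C] (I : Type v) (J : I → Type v) (c : ∀ i, J i → C) :
    Nonempty (IsLimit (Fan.mk (f := fun i => (⟨J i, c i⟩ : FreeCoprod C))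
      (⟨∀ i, J i, fun jbar => ∏ᶜ fun i => c i (jbar i)⟩ : FreeCoprod C)
      (fun i => ⟨fun jbar => jbar i, fun jbar => Pi.π (fun i' => c i' (jbar i')) i⟩))) ∧
    HasProducts.{v} (FreeCoprod C) :=
  ⟨⟨FreeCoprod.isLimitDistribFan J c⟩, FreeCoprod.hasProducts⟩
end

section
/- The category ΣΠ1 of polynomials in the terminal category 1 is equivalent to the category Poly of polynomial functors Set → Set (coproducts of representable functors) and natural transformations between them. -/
/-
In `ΣΠ1` a morphism `∑_{i∈I} ∏_{A_i} 1 ⟶ ∑_{j∈J} ∏_{B_j} 1` is a map `f : I → J` together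
with maps `B_{f i} → A_i`. By the Yoneda lemma this is exactly a natural transformation
`∑_i Set(A_i, −) ⟶ ∑_j Set(B_j, −)`: it is determined by the images of the generic elements
`𝟙 (A i)`, each of which lies in a single summand. Hence reading a polynomial as a functor is
fully faithful, and its essential image consists of the polynomial functors.
-/

open CategoryTheory Limits Opposite

universe v u

/-- The category of polynomials in `C`: the free coproduct completion of the free product
completion of `C`. -/
abbrev SigmaPi (C : Type u) [Category.{v} C] := FreeCoprod (FreeProd C)

/-- The polynomial `∑_{i∈I} ∏_{a∈A_i} c_{i,a}` as an object of `ΣΠC`. -/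
def polyObj {C : Type u} [Category.{v} C] (I : Type v) (A : I → Type v)
    (c : ∀ i, A i → C) : SigmaPi C :=
  ⟨I, fun i => ⟨A i, c i⟩⟩

/-- A functor `Set ⥤ Set` is a polynomial functor if it is isomorphic to a coproduct of
representables `∑_{i∈I} Set(A_i, −)`. -/
def IsPolynomialFunctor (F : Type v ⥤ Type v) : Prop :=
  ∃ (I : Type v) (A : I → Type v), Nonempty (F ≅ ∐ fun i => coyoneda.obj (op (A i)))

section PolynomialFunctor

variable {I : Type v} (A : I → Type v)

def polynomialFunctor : Type v ⥤ Type v where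
  obj X := Σ i, (A i ⟶ X)
  map f := ↾fun p => ⟨p.1, p.2 ≫ f⟩

def polynomialFunctorCofan : Cofan fun i => coyoneda.obj (op (A i)) :=
  Cofan.mk (polynomialFunctor A) fun i => { app := fun _ => ↾fun x => ⟨i, x⟩ }

def isColimitPolynomialFunctorCofan : IsColimit (polynomialFunctorCofan A) :=
  Cofan.IsColimit.mk _
    (fun t => { app := fun X => ↾fun p => (t.inj p.1).app X p.2
                naturality := fun X Y f => by
                  ext ⟨i, x⟩
                  exact ConcreteCategory.congr_hom ((t.inj i).naturality f) x })
    (fun _ _ => rfl)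
    (fun t m hm => by
      ext X ⟨i, x⟩
      exact ConcreteCategory.congr_hom (NatTrans.congr_app (hm i) X) x)

noncomputable def polynomialFunctorIsoSigma :
    polynomialFunctor A ≅ ∐ fun i => coyoneda.obj (op (A i)) :=
  (colimit.isoColimitCocone ⟨_, isColimitPolynomialFunctorCofan A⟩).symm

end PolynomialFunctor

theorem isPolynomialFunctor_iff (F : Type v ⥤ Type v) :
    IsPolynomialFunctor F ↔ ∃ (I : Type v) (A : I → Type v), Nonempty (F ≅ polynomialFunctor A) :=
  exists_congr fun _ => exists_congr fun A =>
    ⟨fun ⟨e⟩ => ⟨e ≪≫ (polynomialFunctorIsoSigma A).symm⟩,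
      fun ⟨e⟩ => ⟨e ≪≫ polynomialFunctorIsoSigma A⟩⟩

theorem FreeProd.hom_ext_of_isThin {C : Type u} [Category.{v} C] [Quiver.IsThin C]
    {X Y : FreeProd C} {F G : X ⟶ Y} (h : F.1 = G.1) : F = G := by
  obtain ⟨f, g⟩ := F
  obtain ⟨f', g'⟩ := G
  subst h
  congr
  exact funext fun _ => Subsingleton.elim _ _

def sigmaPiTerminalToFunctor : SigmaPi (Discrete PUnit.{v + 1}) ⥤ Type v ⥤ Type v where
  obj P := polynomialFunctor fun i => (P.obj i).ι
  map F := { app := fun _ => ↾fun p => ⟨F.1 p.1, ↾(F.2 p.1).1 ≫ p.2⟩ }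

def sigmaPiTerminalToFunctorFullyFaithful : sigmaPiTerminalToFunctor.{v}.FullyFaithful where
  -- Yoneda: `η` is determined by where it sends the generic element `⟨i, 𝟙 _⟩`.
  preimage {P Q} η :=
    ⟨fun i => (η.app _ ⟨i, 𝟙 _⟩).1,
      fun i => ⟨(η.app _ ⟨i, 𝟙 _⟩).2, fun _ => Discrete.eqToHom (Subsingleton.elim _ _)⟩⟩
  map_preimage η := by
    ext X ⟨i, x⟩
    exact (ConcreteCategory.congr_hom (η.naturality x) ⟨i, 𝟙 _⟩).symm
  preimage_map _ := Sigma.ext rfl <| heq_of_eq <| funext fun _ => FreeProd.hom_ext_of_isThin rfl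

theorem essImage_sigmaPiTerminalToFunctor :
    sigmaPiTerminalToFunctor.{v}.essImage = IsPolynomialFunctor := by
  ext F
  rw [isPolynomialFunctor_iff]
  constructor
  · rintro ⟨P, ⟨e⟩⟩
    exact ⟨P.ι, fun i => (P.obj i).ι, ⟨e.symm⟩⟩
  · rintro ⟨I, A, ⟨e⟩⟩
    exact ⟨polyObj I A fun _ _ => ⟨PUnit.unit⟩, ⟨e.symm⟩⟩

/-- `Poly ≌ ΣΠ1`, where `1` is the terminal category: the category of polynomials
in the terminal category is equivalent to the full subcategory of `[Set, Set]` spanned by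
polynomial functors (coproducts of representables). -/
theorem sigmaPi_terminal_equiv_poly :
    Nonempty (SigmaPi (Discrete PUnit.{v + 1}) ≌
      ObjectProperty.FullSubcategory (IsPolynomialFunctor.{v})) := by
  have := sigmaPiTerminalToFunctorFullyFaithful.full
  have := sigmaPiTerminalToFunctorFullyFaithful.faithful
  exact ⟨sigmaPiTerminalToFunctor.toEssImage.asEquivalence.trans
    (ObjectProperty.fullSubcategoryCongr essImage_sigmaPiTerminalToFunctor)⟩
end

section
/- The full subcategory Hmg(2) of homogeneous polynomials in the walking arrow category 2 is equivalent to de Paiva's dialectica category Dial(Set): objects are triples (I, A, c) with c: I × A → {⊥, ⊤}, and morphisms (I, A, c) → (J, B, d) are pairs (φ: I → J, φ♯: I × B → A) such that c(i, φ♯(i,b)) = ⊤ implies d(φi, b) = ⊤ for all i ∈ I, b ∈ B. -/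
open CategoryTheory Limits Opposite

universe v u

/-- A polynomial in `C` is homogeneous if it can be written with a direction set independent
of the position. -/
def IsHomogeneous {C : Type u} [Category.{v} C] (X : SigmaPi C) : Prop :=
  ∃ (I : Type v) (A : Type v) (c : I → A → C), Nonempty (X ≅ polyObj I (fun _ => A) c)

/-- Objects of de Paiva's dialectica category `Dial(Set)`: triples `(I, A, c)` with
`c : I × A → {⊥, ⊤}` (we write the two-element poset `2` as `Bool` with `false = ⊥ ≤ ⊤ = true`). -/
structure DialObj : Type 1 where
  pos : Type
  dir : Type
  rel : pos → dir → Bool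

/-- Morphisms of `Dial(Set)`. -/
@[ext] structure DialHom (X Y : DialObj) where
  toFun : X.pos → Y.pos
  back : X.pos → Y.dir → X.dir
  cond : ∀ i b, X.rel i (back i b) = true → Y.rel (toFun i) b = true

instance : Category DialObj where
  Hom := DialHom
  id X := ⟨fun i => i, fun _ a => a, fun _ _ h => h⟩
  comp f g := ⟨fun i => g.toFun (f.toFun i), fun i b => f.back i (g.back (f.toFun i) b),
    fun i b h => g.cond _ _ (f.cond _ _ h)⟩

/-!
`Hmg(2)` is the essential image of the functor `Dial(Set) ⥤ ΣΠ2` sending `(I, A, c)` to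
`∑_{i ∈ I} ∏_{a ∈ A} c(i, a)`. This functor is fully faithful because an arrow of the poset `2`
is exactly an implication, so a family of arrows `c(i, φ♯(i, b)) ⟶ d(φ i, b)` is exactly the
condition on a dialectica morphism `(φ, φ♯)`.
-/

def dialToPoly : DialObj ⥤ SigmaPi Bool where
  obj X := polyObj X.pos (fun _ => X.dir) X.rel
  map f := ⟨f.toFun, fun i => ⟨f.back i, fun b => homOfLE (Bool.le_iff_imp.mpr (f.cond i b))⟩⟩

def fullyFaithfulDialToPoly : dialToPoly.FullyFaithful where
  preimage f := ⟨f.1, fun i => (f.2 i).1, fun i b => Bool.le_iff_imp.mp ((f.2 i).2 b).le⟩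

theorem essImage_dialToPoly : dialToPoly.essImage = IsHomogeneous := by
  ext X
  constructor
  · rintro ⟨Y, ⟨e⟩⟩
    exact ⟨Y.pos, Y.dir, Y.rel, ⟨e.symm⟩⟩
  · rintro ⟨I, A, c, ⟨e⟩⟩
    exact ⟨⟨I, A, c⟩, ⟨e.symm⟩⟩

/-- the full subcategory `Hmg(2)` of homogeneous polynomials in the walking
arrow category `2` (here the poset `Bool`) is equivalent to the dialectica category
`Dial(Set)`. -/
theorem hmg_two_equiv_dial :
    Nonempty (ObjectProperty.FullSubcategory (IsHomogeneous (C := Bool)) ≌ DialObj) := by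
  rw [← essImage_dialToPoly]
  have := fullyFaithfulDialToPoly.full
  have := fullyFaithfulDialToPoly.faithful
  exact ⟨dialToPoly.toEssImage.asEquivalence.symm⟩
end

section
/- For a monoidal category (C, e, ·), the composition product ◁ on ΣΠC, given on objects by (∑_{i∈I} ∏_{a∈A_i} u_{i,a}) ◁ (∑_{j∈J} ∏_{b∈B_j} v_{j,b}) = ∑_{i∈I} ∑_{j̄: A_i → J} ∏_{a∈A_i} ∏_{b∈B_{j̄(a)}} (u_{i,a} · v_{j̄(a),b}), extends to a monoidal structure (ΣΠC, e, ◁) with unit e (the one-position, one-direction polynomial with predicate e). -/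
open CategoryTheory Limits Opposite MonoidalCategory

universe v u

/-- The composition product of two objects of `ΣΠC`, in distributed form:
`(∑_i ∏_a u_{i,a}) ◁ (∑_j ∏_b v_{j,b}) = ∑_{i∈I} ∑_{j̄ : A_i → J} ∏_{a∈A_i} ∏_{b∈B_{j̄ a}}
(u_{i,a} · v_{j̄ a,b})`. -/
def compObj {C : Type u} [Category.{v} C] [MonoidalCategory C] (X Y : SigmaPi C) :
    SigmaPi C :=
  polyObj (Σ i : X.ι, ((X.obj i).ι → Y.ι))
    (fun p => Σ a : (X.obj p.1).ι, (Y.obj (p.2 a)).ι)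
    (fun p q => (X.obj p.1).obj q.1 ⊗ (Y.obj (p.2 q.1)).obj q.2)


/-! A morphism of `ΣΠC` reindexes positions forwards and directions backwards and carries
components in `C`; the composition product acts on components by the tensor product of `C`.
The associator and unitors of `ΣΠC` reindex along the canonical bijections of Σ-types, which are
inverse to each other definitionally, and have the associator and unitors of `C` as components.
So in every axiom of a monoidal category both sides of `ΣΠC` reindex in the same way on the nose,
and their components are an instance of the same axiom in `C`. -/

lemma FreeProd.hom_ext {C : Type u} [Category.{v} C] {X Y : FreeProd C} {F G : X ⟶ Y}
    (h₁ : F.1 = G.1) (h₂ : ∀ j, HEq (F.2 j) (G.2 j)) : F = G := by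
  obtain ⟨f, F⟩ := F
  obtain ⟨g, G⟩ := G
  obtain rfl : f = g := h₁
  exact congrArg _ (funext fun j => eq_of_heq (h₂ j))

lemma FreeCoprod.hom_ext {D : Type u} [Category.{v} D] {X Y : FreeCoprod D} {F G : X ⟶ Y}
    (h₁ : F.1 = G.1) (h₂ : ∀ i, HEq (F.2 i) (G.2 i)) : F = G := by
  obtain ⟨f, F⟩ := F
  obtain ⟨g, G⟩ := G
  obtain rfl : f = g := h₁
  exact congrArg _ (funext fun i => eq_of_heq (h₂ i))

namespace SigmaPi

variable {C : Type u} [Category.{v} C] [MonoidalCategory C]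

def compHom {X X' Y Y' : SigmaPi C} (φ : X ⟶ X') (ψ : Y ⟶ Y') :
    compObj X Y ⟶ compObj X' Y' :=
  ⟨fun p => ⟨φ.1 p.1, fun a' => ψ.1 (p.2 ((φ.2 p.1).1 a'))⟩,
   fun p => ⟨fun q => ⟨(φ.2 p.1).1 q.1, (ψ.2 (p.2 ((φ.2 p.1).1 q.1))).1 q.2⟩,
     fun q => (φ.2 p.1).2 q.1 ⊗ₘ (ψ.2 (p.2 ((φ.2 p.1).1 q.1))).2 q.2⟩⟩

/- The whiskerings are defined directly rather than as `compHom (𝟙 X) ψ` and `compHom φ (𝟙 Y)`,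
so that every monoidal axiom of `ΣΠC` is, component by component, the same axiom of `C`. -/
def compWhiskerLeft (X : SigmaPi C) {Y Y' : SigmaPi C} (ψ : Y ⟶ Y') :
    compObj X Y ⟶ compObj X Y' :=
  ⟨fun p => ⟨p.1, fun a => ψ.1 (p.2 a)⟩,
   fun p => ⟨fun q => ⟨q.1, (ψ.2 (p.2 q.1)).1 q.2⟩,
     fun q => (X.obj p.1).obj q.1 ◁ (ψ.2 (p.2 q.1)).2 q.2⟩⟩

def compWhiskerRight {X X' : SigmaPi C} (φ : X ⟶ X') (Y : SigmaPi C) :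
    compObj X Y ⟶ compObj X' Y :=
  ⟨fun p => ⟨φ.1 p.1, fun a' => p.2 ((φ.2 p.1).1 a')⟩,
   fun p => ⟨fun q => ⟨(φ.2 p.1).1 q.1, q.2⟩,
     fun q => (φ.2 p.1).2 q.1 ▷ (Y.obj (p.2 ((φ.2 p.1).1 q.1))).obj q.2⟩⟩

variable (C) in
def compUnit : SigmaPi C :=
  polyObj PUnit (fun _ => PUnit) (fun _ _ => 𝟙_ C)

def compAssociator (X Y Z : SigmaPi C) :
    compObj (compObj X Y) Z ≅ compObj X (compObj Y Z) where
  hom := ⟨fun P => ⟨P.1.1, fun a => ⟨P.1.2 a, fun b => P.2 ⟨a, b⟩⟩⟩,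
    fun _ => ⟨fun q => ⟨⟨q.1, q.2.1⟩, q.2.2⟩, fun _ => (α_ _ _ _).hom⟩⟩
  inv := ⟨fun P => ⟨⟨P.1, fun a => (P.2 a).1⟩, fun q => (P.2 q.1).2 q.2⟩,
    fun _ => ⟨fun q => ⟨q.1.1, q.1.2, q.2⟩, fun _ => (α_ _ _ _).inv⟩⟩
  hom_inv_id := FreeCoprod.hom_ext rfl fun _ => heq_of_eq <|
    FreeProd.hom_ext rfl fun _ => heq_of_eq <| Iso.hom_inv_id _
  inv_hom_id := FreeCoprod.hom_ext rfl fun _ => heq_of_eq <|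
    FreeProd.hom_ext rfl fun _ => heq_of_eq <| Iso.inv_hom_id _

def compLeftUnitor (X : SigmaPi C) : compObj (compUnit C) X ≅ X where
  hom := ⟨fun p => p.2 PUnit.unit, fun _ => ⟨fun b => ⟨PUnit.unit, b⟩, fun _ => (λ_ _).hom⟩⟩
  inv := ⟨fun i => ⟨PUnit.unit, fun _ => i⟩, fun _ => ⟨fun q => q.2, fun _ => (λ_ _).inv⟩⟩
  hom_inv_id := FreeCoprod.hom_ext rfl fun _ => heq_of_eq <|
    FreeProd.hom_ext rfl fun _ => heq_of_eq <| Iso.hom_inv_id _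
  inv_hom_id := FreeCoprod.hom_ext rfl fun _ => heq_of_eq <|
    FreeProd.hom_ext rfl fun _ => heq_of_eq <| Iso.inv_hom_id _

def compRightUnitor (X : SigmaPi C) : compObj X (compUnit C) ≅ X where
  hom := ⟨fun p => p.1, fun _ => ⟨fun a => ⟨a, PUnit.unit⟩, fun _ => (ρ_ _).hom⟩⟩
  inv := ⟨fun i => ⟨i, fun _ => PUnit.unit⟩, fun _ => ⟨fun q => q.1, fun _ => (ρ_ _).inv⟩⟩
  hom_inv_id := FreeCoprod.hom_ext rfl fun _ => heq_of_eq <|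
    FreeProd.hom_ext rfl fun _ => heq_of_eq <| Iso.hom_inv_id _
  inv_hom_id := FreeCoprod.hom_ext rfl fun _ => heq_of_eq <|
    FreeProd.hom_ext rfl fun _ => heq_of_eq <| Iso.inv_hom_id _

instance compMonoidalStruct : MonoidalCategoryStruct (SigmaPi C) where
  tensorObj := compObj
  tensorHom := compHom
  whiskerLeft := compWhiskerLeft
  whiskerRight := compWhiskerRight
  tensorUnit := compUnit C
  associator := compAssociator
  leftUnitor := compLeftUnitor
  rightUnitor := compRightUnitor

instance compMonoidal : MonoidalCategory (SigmaPi C) where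
  tensorHom_def _ _ := FreeCoprod.hom_ext rfl fun _ => heq_of_eq <|
    FreeProd.hom_ext rfl fun _ => heq_of_eq <| tensorHom_def _ _
  id_tensorHom_id _ _ := FreeCoprod.hom_ext rfl fun _ => heq_of_eq <|
    FreeProd.hom_ext rfl fun _ => heq_of_eq <| id_tensorHom_id _ _
  tensorHom_comp_tensorHom _ _ _ _ := FreeCoprod.hom_ext rfl fun _ => heq_of_eq <|
    FreeProd.hom_ext rfl fun _ => heq_of_eq <| tensorHom_comp_tensorHom _ _ _ _
  whiskerLeft_id _ _ := FreeCoprod.hom_ext rfl fun _ => heq_of_eq <|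
    FreeProd.hom_ext rfl fun _ => heq_of_eq <| whiskerLeft_id _ _
  id_whiskerRight _ _ := FreeCoprod.hom_ext rfl fun _ => heq_of_eq <|
    FreeProd.hom_ext rfl fun _ => heq_of_eq <| id_whiskerRight _ _
  associator_naturality _ _ _ := FreeCoprod.hom_ext rfl fun _ => heq_of_eq <|
    FreeProd.hom_ext rfl fun _ => heq_of_eq <| associator_naturality _ _ _
  leftUnitor_naturality _ := FreeCoprod.hom_ext rfl fun _ => heq_of_eq <|
    FreeProd.hom_ext rfl fun _ => heq_of_eq <| leftUnitor_naturality _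
  rightUnitor_naturality _ := FreeCoprod.hom_ext rfl fun _ => heq_of_eq <|
    FreeProd.hom_ext rfl fun _ => heq_of_eq <| rightUnitor_naturality _
  pentagon _ _ _ _ := FreeCoprod.hom_ext rfl fun _ => heq_of_eq <|
    FreeProd.hom_ext rfl fun _ => heq_of_eq <| pentagon _ _ _ _
  triangle _ _ := FreeCoprod.hom_ext rfl fun _ => heq_of_eq <|
    FreeProd.hom_ext rfl fun _ => heq_of_eq <| triangle _ _

end SigmaPi

/-- for a monoidal category `(C, e, ·)`, the composition product `◁` extends to
a monoidal structure on `ΣΠC` whose unit is the one-position, one-direction polynomial with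
predicate `e`. -/
theorem sigmaPi_composition_monoidal (C : Type u) [Category.{v} C] [MonoidalCategory C] :
    ∃ M : MonoidalCategory (SigmaPi C),
      M.tensorUnit = polyObj PUnit (fun _ => PUnit) (fun _ _ => 𝟙_ C) ∧
      ∀ X Y : SigmaPi C, M.tensorObj X Y = compObj X Y :=
  ⟨SigmaPi.compMonoidal, rfl, fun _ _ => rfl⟩
end

section
/- For a generalized Lawvere metric space X (a comonoid in (ΣΠ[0,∞]_≤, 0, ◁)), there is a natural bijection between discrete dynamical systems φ: X → ∞ (morphisms in ΣΠ[0,∞]_≤ to the one-position, one-direction polynomial with predicate ∞) and (Σ[0,∞]_≥, 0, ⊕)-enriched cofunctors Φ: X ⇸ B_∞, where B_∞ is the one-object enriched category with hom-set ℕ, addition as composition, and all weights ∞. -/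
open CategoryTheory Limits Opposite MonoidalCategory ENNReal

universe v u

/-- The poset `[0, ∞]` of extended nonnegative reals, ordered by `≤` and viewed as a
category, is monoidal with unit `0` and tensor product `+`. -/
noncomputable instance : MonoidalCategory ℝ≥0∞ where
  tensorObj a b := a + b
  whiskerLeft a _ _ f := homOfLE (add_le_add_right (leOfHom f) a)
  whiskerRight f b := homOfLE (add_le_add_left (leOfHom f) b)
  tensorHom f g := homOfLE (add_le_add (leOfHom f) (leOfHom g))
  tensorUnit := 0
  associator a b c := eqToIso (add_assoc a b c)
  leftUnitor a := eqToIso (zero_add a)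
  rightUnitor a := eqToIso (add_zero a)
  tensorHom_def := by intros; exact Subsingleton.elim _ _
  id_tensorHom_id := by intros; exact Subsingleton.elim _ _
  tensorHom_comp_tensorHom := by intros; exact Subsingleton.elim _ _
  whiskerLeft_id := by intros; exact Subsingleton.elim _ _
  id_whiskerRight := by intros; exact Subsingleton.elim _ _
  associator_naturality := by intros; exact Subsingleton.elim _ _
  leftUnitor_naturality := by intros; exact Subsingleton.elim _ _
  rightUnitor_naturality := by intros; exact Subsingleton.elim _ _
  pentagon := by intros; exact Subsingleton.elim _ _
  triangle := by intros; exact Subsingleton.elim _ _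

/-- A small `(ΣCᵒᵖ, e, ⊙)`-enriched category, presented concretely: a set of objects,
morphisms with source and target, each morphism `f` carrying a weight `|f| ∈ C`; identity
morphisms with identity maps `η_x : |id_x| ⟶ e` in `C`; composition with composite maps
`μ_{f,g} : |gf| ⟶ |f| ⊗ |g|` in `C`; satisfying unitality and associativity coherence. -/
structure WCat (C : Type u) [Category.{v} C] [MonoidalCategory C] :
    Type (max u (v + 1)) where
  Obj : Type v
  Mor : Type v
  src : Mor → Obj
  tgt : Mor → Obj
  wt : Mor → C
  ide : Obj → Mor
  ide_src : ∀ x, src (ide x) = x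
  ide_tgt : ∀ x, tgt (ide x) = x
  cmp : ∀ (f g : Mor), tgt f = src g → Mor
  cmp_src : ∀ f g h, src (cmp f g h) = src f
  cmp_tgt : ∀ f g h, tgt (cmp f g h) = tgt g
  η : ∀ x, wt (ide x) ⟶ 𝟙_ C
  μ : ∀ f g h, wt (cmp f g h) ⟶ wt f ⊗ wt g
  ide_cmp : ∀ f : Mor, cmp (ide (src f)) f (ide_tgt _) = f
  cmp_ide : ∀ f : Mor, cmp f (ide (tgt f)) ((ide_src _).symm) = f
  cmp_assoc : ∀ (f g h : Mor) (hfg : tgt f = src g) (hgh : tgt g = src h),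
    cmp (cmp f g hfg) h (by rw [cmp_tgt]; exact hgh) =
      cmp f (cmp g h hgh) (by rw [cmp_src]; exact hfg)
  unit_left : ∀ f : Mor,
    μ (ide (src f)) f (ide_tgt _) ≫ (η (src f) ▷ wt f) ≫ (λ_ (wt f)).hom =
      eqToHom (congrArg wt (ide_cmp f))
  unit_right : ∀ f : Mor,
    μ f (ide (tgt f)) ((ide_src _).symm) ≫ (wt f ◁ η (tgt f)) ≫ (ρ_ (wt f)).hom =
      eqToHom (congrArg wt (cmp_ide f))
  mu_assoc : ∀ (f g h : Mor) (hfg : tgt f = src g) (hgh : tgt g = src h),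
    μ f (cmp g h hgh) (by rw [cmp_src]; exact hfg) ≫ (wt f ◁ μ g h hgh) =
      eqToHom (congrArg wt (cmp_assoc f g h hfg hgh)).symm ≫
        μ (cmp f g hfg) h (by rw [cmp_tgt]; exact hgh) ≫
        (μ f g hfg ▷ wt h) ≫ (α_ (wt f) (wt g) (wt h)).hom

/-- A `(ΣCᵒᵖ, e, ⊙)`-enriched cofunctor between small enriched categories, presented
concretely: an object function, lifts of morphisms out of images, and weight maps
`|Φ♯_a f| ⟶ |f|` in `C`, preserving identities and composites compatibly with `η` and `μ`. -/
structure WCof {C : Type u} [Category.{v} C] [MonoidalCategory C] (A B : WCat C) :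
    Type (max u v) where
  onObj : A.Obj → B.Obj
  lift : ∀ (a : A.Obj) (f : B.Mor), B.src f = onObj a → A.Mor
  lift_src : ∀ a f h, A.src (lift a f h) = a
  lift_tgt : ∀ a f h, onObj (A.tgt (lift a f h)) = B.tgt f
  onW : ∀ a f h, A.wt (lift a f h) ⟶ B.wt f
  lift_ide : ∀ a : A.Obj, lift a (B.ide (onObj a)) (B.ide_src _) = A.ide a
  ide_coh : ∀ a : A.Obj,
    onW a (B.ide (onObj a)) (B.ide_src _) ≫ B.η (onObj a) =
      eqToHom (congrArg A.wt (lift_ide a)) ≫ A.η a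
  lift_cmp : ∀ (a : A.Obj) (f g : B.Mor) (hf : B.src f = onObj a)
      (hfg : B.tgt f = B.src g),
    lift a (B.cmp f g hfg) (by rw [B.cmp_src]; exact hf) =
      A.cmp (lift a f hf) (lift (A.tgt (lift a f hf)) g (by rw [lift_tgt]; exact hfg.symm))
        ((lift_src _ _ _).symm)
  cmp_coh : ∀ (a : A.Obj) (f g : B.Mor) (hf : B.src f = onObj a)
      (hfg : B.tgt f = B.src g),
    onW a (B.cmp f g hfg) (by rw [B.cmp_src]; exact hf) ≫ B.μ f g hfg =
      eqToHom (congrArg A.wt (lift_cmp a f g hf hfg)) ≫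
        A.μ _ _ ((lift_src _ _ _).symm) ≫
        (onW a f hf ⊗ₘ onW (A.tgt (lift a f hf)) g (by rw [lift_tgt]; exact hfg.symm))


/-- The one-object `(Σ[0,∞]_≥, 0, ⊕)`-enriched category with hom-set `ℕ`, addition as
composition, and weight `|n| = n · r`. -/
noncomputable def natWeighted (r : ℝ≥0∞) : WCat ℝ≥0∞ where
  Obj := PUnit
  Mor := ℕ
  src _ := PUnit.unit
  tgt _ := PUnit.unit
  wt n := (n : ℝ≥0∞) * r
  ide _ := 0
  ide_src _ := rfl
  ide_tgt _ := rfl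
  cmp m n _ := m + n
  cmp_src _ _ _ := rfl
  cmp_tgt _ _ _ := rfl
  η _ := homOfLE (by simp)
  μ m n _ := homOfLE (le_of_eq (by show ((↑(m + n) : ℝ≥0∞)) * r = (↑m : ℝ≥0∞) * r + (↑n : ℝ≥0∞) * r; push_cast; ring))
  ide_cmp f := Nat.zero_add f
  cmp_ide f := Nat.add_zero f
  cmp_assoc f g h _ _ := Nat.add_assoc f g h
  unit_left _ := Subsingleton.elim _ _
  unit_right _ := Subsingleton.elim _ _
  mu_assoc _ _ _ _ _ := Subsingleton.elim _ _

/-- A generalized Lawvere metric space `X` (a small `(Σ[0,∞]_≥, 0, ⊕)`-enriched category,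
i.e. a comonoid in `(ΣΠ[0,∞]_≤, 0, ◁)`), viewed as its underlying polynomial in `[0,∞]_≤`:
positions are points, directions at `x` are the paths out of `x`, and predicates are costs. -/
noncomputable def polyOf (X : WCat ℝ≥0∞) : SigmaPi ℝ≥0∞ :=
  polyObj X.Obj (fun x => {m : X.Mor // X.src m = x}) (fun _ m => X.wt m.1)

/-- The one-position, one-direction polynomial with predicate `∞`. -/
noncomputable def inftyObj : SigmaPi ℝ≥0∞ :=
  polyObj PUnit (fun _ => PUnit) (fun _ _ => (∞ : ℝ≥0∞))

/-! A morphism `polyOf X ⟶ inftyObj` carries no data beyond a choice of one path out of each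
point: its map on weights lands in `∞`, so is automatic. A cofunctor into `B_∞` is likewise
determined by where it sends `1 : ℕ`, since `n = 1 + ⋯ + 1` and lifts preserve composites; its
weight maps are automatic because `n · ∞ = ∞` for `n ≥ 1` and `|id_x| ≤ 0` for `n = 0`. -/

namespace WCat

variable {C : Type u} [Category.{v} C] [MonoidalCategory C] (X : WCat C)

lemma cmp_congr {f f' g g' : X.Mor} (hf : f = f') (hg : g = g')
    (h : X.tgt f = X.src g) (h' : X.tgt f' = X.src g') :
    X.cmp f g h = X.cmp f' g' h' := by
  subst hf hg; rfl

lemma ide_cmp_of_src_eq {a : X.Obj} {f : X.Mor} (ha : X.src f = a)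
    (h : X.tgt (X.ide a) = X.src f) : X.cmp (X.ide a) f h = f := by
  subst ha; exact X.ide_cmp f

def iterate (t : ∀ x, {m : X.Mor // X.src m = x}) : ℕ → ∀ x, {m : X.Mor // X.src m = x}
  | 0, x => ⟨X.ide x, X.ide_src x⟩
  | n + 1, x =>
    ⟨X.cmp (t x).1 (iterate t n (X.tgt (t x))).1 (iterate t n (X.tgt (t x))).2.symm,
      by rw [X.cmp_src]; exact (t x).2⟩

variable {X} (t : ∀ x, {m : X.Mor // X.src m = x})

lemma iterate_add (m n : ℕ) (x : X.Obj) :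
    (X.iterate t (m + n) x).1 =
      X.cmp (X.iterate t m x).1 (X.iterate t n (X.tgt (X.iterate t m x).1)).1
        (X.iterate t n _).2.symm := by
  induction m generalizing x with
  | zero =>
    rw [Nat.zero_add]
    calc (X.iterate t n x).1 = (X.iterate t n (X.tgt (X.ide x))).1 :=
          congrArg (fun y => (X.iterate t n y).1) (X.ide_tgt x).symm
      _ = _ := (ide_cmp_of_src_eq X ((X.iterate t n _).2.trans (X.ide_tgt x)) _).symm
  | succ m ih =>
    rw [Nat.succ_add]
    let y := X.tgt (t x).1
    calc X.cmp (t x).1 (X.iterate t (m + n) y).1 _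
        = X.cmp (t x).1 (X.cmp (X.iterate t m y).1
            (X.iterate t n (X.tgt (X.iterate t m y).1)).1 (X.iterate t n _).2.symm)
            (by rw [X.cmp_src]; exact (X.iterate t m y).2.symm) :=
          X.cmp_congr rfl (ih y) _ _
      _ = X.cmp (X.cmp (t x).1 (X.iterate t m y).1 (X.iterate t m y).2.symm)
            (X.iterate t n (X.tgt (X.iterate t m y).1)).1
            (by rw [X.cmp_tgt]; exact (X.iterate t n _).2.symm) :=
          (X.cmp_assoc _ _ _ _ _).symm
      _ = _ :=
          X.cmp_congr rfl (congrArg (fun z => (X.iterate t n z).1) (X.cmp_tgt _ _ _).symm) _ _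

lemma iterate_one (x : X.Obj) : (X.iterate t 1 x).1 = (t x).1 :=
  X.cmp_ide _

end WCat

lemma WCat.wt_iterate_le_nat_mul_top (X : WCat ℝ≥0∞) (t : ∀ x, {m : X.Mor // X.src m = x})
    (n : ℕ) (x : X.Obj) : X.wt (X.iterate t n x).1 ≤ (n : ℝ≥0∞) * ∞ := by
  cases n with
  | zero =>
    show X.wt (X.ide x) ≤ _
    simpa using (leOfHom (X.η x) : X.wt (X.ide x) ≤ 0)
  | succ n => simp

namespace WCof

variable {C : Type u} [Category.{v} C] [MonoidalCategory C]

lemma ext_of_isThin [Quiver.IsThin C] {A B : WCat C} {F G : WCof A B}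
    (h_onObj : F.onObj = G.onObj) (h_lift : ∀ a f h h', F.lift a f h = G.lift a f h') :
    F = G := by
  obtain ⟨o, l, _, _, w, _, _, _, _⟩ := F
  obtain ⟨o', l', _, _, w', _, _, _, _⟩ := G
  subst h_onObj
  obtain rfl : l = l' := funext fun a => funext fun f => funext fun h => h_lift a f h h
  obtain rfl : w = w' := funext fun _ => funext fun _ => funext fun _ => Subsingleton.elim _ _
  rfl

noncomputable def ofIterate (X : WCat ℝ≥0∞) (t : ∀ x, {m : X.Mor // X.src m = x}) :
    WCof X (natWeighted ∞) where
  onObj _ := PUnit.unit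
  lift x n _ := (X.iterate t n x).1
  lift_src x n _ := (X.iterate t n x).2
  lift_tgt _ _ _ := rfl
  onW x n _ := homOfLE (X.wt_iterate_le_nat_mul_top t n x)
  lift_ide _ := rfl
  ide_coh _ := Subsingleton.elim _ _
  lift_cmp x m n _ _ := WCat.iterate_add t m n x
  cmp_coh _ _ _ _ _ := Subsingleton.elim _ _

lemma lift_eq_iterate {X : WCat ℝ≥0∞} {r : ℝ≥0∞} (Φ : WCof X (natWeighted r))
    (n : ℕ) (x : X.Obj) :
    Φ.lift x n rfl =
      (X.iterate (fun y => ⟨Φ.lift y (1 : ℕ) rfl, Φ.lift_src y (1 : ℕ) rfl⟩) n x).1 := by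
  induction n generalizing x with
  | zero => exact Φ.lift_ide x
  | succ n ih =>
    exact (congrArg (fun k => Φ.lift x k rfl) (Nat.add_comm n 1)).trans
      ((Φ.lift_cmp x (1 : ℕ) n rfl rfl).trans (X.cmp_congr rfl (ih _) _ _))

end WCof

noncomputable def homInftyEquivPathChoices (X : WCat ℝ≥0∞) :
    (polyOf X ⟶ inftyObj) ≃ ∀ x : X.Obj, {m : X.Mor // X.src m = x} where
  toFun φ x := (φ.2 x).1 PUnit.unit
  invFun t := ⟨fun _ => PUnit.unit, fun x => ⟨fun _ => t x, fun _ => homOfLE le_top⟩⟩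
  left_inv _ := rfl
  right_inv _ := rfl

noncomputable def pathChoicesEquivWCof (X : WCat ℝ≥0∞) :
    (∀ x : X.Obj, {m : X.Mor // X.src m = x}) ≃ WCof X (natWeighted ∞) where
  toFun := WCof.ofIterate X
  invFun Φ x := ⟨Φ.lift x (1 : ℕ) rfl, Φ.lift_src x (1 : ℕ) rfl⟩
  left_inv t := funext fun x => Subtype.ext (WCat.iterate_one t x)
  right_inv Φ := WCof.ext_of_isThin rfl fun x n _ _ => (Φ.lift_eq_iterate n x).symm

/-- for a generalized Lawvere metric space `X`, discrete dynamical systems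
`φ : X → ∞` (morphisms in `ΣΠ[0,∞]_≤` from the underlying polynomial of `X` to the
one-position, one-direction polynomial with predicate `∞`) are in natural bijection with
`(Σ[0,∞]_≥, 0, ⊕)`-enriched cofunctors `Φ : X ⇸ B_∞`, where `B_∞` is the one-object
enriched category with hom-set `ℕ`, addition as composition, and all weights infinite
(`|n| = n · ∞`). -/
theorem dds_equiv_enriched_cofunctors (X : WCat ℝ≥0∞) :
    Nonempty ((polyOf X ⟶ inftyObj) ≃ WCof X (natWeighted ∞)) :=
  ⟨(homInftyEquivPathChoices X).trans (pathChoicesEquivWCof X)⟩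
end
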